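/- arXiv:2301.09907 — 7 statements merged into one kernel-verified Lean document; each statement's English description precedes it below -/
import Mathlib

section
/- Let n ≥ 1 and let V := ℝ^{n+2} × (ℝ^{n+2})* with B((x,ξ),(y,η)) := ξ(y) + η(x) and K(x,ξ) := (x,−ξ). The map sending a flag (L, H), where L ⊆ H ⊆ ℝ^{n+2}, dim L = 1, dim H = n+1, to the subspace W := (L × {0}) ⊔ ({0} × Ann(H)) of V (where Ann(H) := {ξ ∈ (ℝ^{n+2})* : H ⊆ ker ξ} is the annihilator of H) is a bijection from the set of all such flags onto the set of 2-dimensional K-invariant totally isotropic subspaces W of V satisfying W ∩ (ℝ^{n+2} × {0}) ≠ 0 and W ∩ ({0} × (ℝ^{n+2})*) ≠ 0. -/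
/-- The para-Hermitian inner product B((x,ξ),(y,η)) = ξ(y) + η(x) on
V = ℝ^m × (ℝ^m)*. -/
def Bfun (m : ℕ) (v w : (Fin m → ℝ) × Module.Dual ℝ (Fin m → ℝ)) : ℝ :=
  v.2 w.1 + w.2 v.1

/-- The para-complex structure K(x,ξ) = (x,−ξ) on V = ℝ^m × (ℝ^m)*. -/
noncomputable def Kmap (m : ℕ) :
    ((Fin m → ℝ) × Module.Dual ℝ (Fin m → ℝ)) →ₗ[ℝ]
      ((Fin m → ℝ) × Module.Dual ℝ (Fin m → ℝ)) :=
  LinearMap.prodMap LinearMap.id (-LinearMap.id)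

set_option maxHeartbeats 1000000

open Module Submodule

namespace Stmt2Aux

variable {m : ℕ}

noncomputable abbrev il (m : ℕ) := LinearMap.inl ℝ (Fin m → ℝ) (Module.Dual ℝ (Fin m → ℝ))
noncomputable abbrev ir (m : ℕ) := LinearMap.inr ℝ (Fin m → ℝ) (Module.Dual ℝ (Fin m → ℝ))

lemma mem_sup_iff (L : Submodule ℝ (Fin m → ℝ)) (A : Submodule ℝ (Module.Dual ℝ (Fin m → ℝ)))
    (v : (Fin m → ℝ) × Module.Dual ℝ (Fin m → ℝ)) :
    v ∈ (L.map (il m) ⊔ A.map (ir m)) ↔ v.1 ∈ L ∧ v.2 ∈ A := by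
  constructor
  · intro hv
    rcases Submodule.mem_sup.mp hv with ⟨a, ha, b, hb, rfl⟩
    rcases ha with ⟨x, hx, rfl⟩
    rcases hb with ⟨ξ, hξ, rfl⟩
    constructor
    · simpa using hx
    · simpa using hξ
  · rintro ⟨h1, h2⟩
    have : v = il m v.1 + ir m v.2 := by simp
    rw [this]
    exact Submodule.add_mem_sup (Submodule.mem_map_of_mem h1) (Submodule.mem_map_of_mem h2)

lemma finrank_sup_eq (L : Submodule ℝ (Fin m → ℝ))
    (A : Submodule ℝ (Module.Dual ℝ (Fin m → ℝ))) :
    finrank ℝ (L.map (il m) ⊔ A.map (ir m) : Submodule ℝ _) = finrank ℝ L + finrank ℝ A := by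
  have hinf : L.map (il m) ⊓ A.map (ir m) = ⊥ := by
    rw [eq_bot_iff]
    rintro v ⟨⟨x, hx, rfl⟩, ⟨ξ, hξ, h⟩⟩
    have h1 : x = 0 := by
      have := congrArg Prod.fst h
      simpa using this.symm
    simp [h1, Submodule.mem_bot]
  have := Submodule.finrank_sup_add_finrank_inf_eq (L.map (il m)) (A.map (ir m))
  rw [hinf] at this
  rw [finrank_bot, add_zero] at this
  rw [this]
  congr 1
  · exact (Submodule.equivMapOfInjective _ LinearMap.inl_injective L).finrank_eq.symm
  · exact (Submodule.equivMapOfInjective _ LinearMap.inr_injective A).finrank_eq.symm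

lemma decomp {W : Submodule ℝ ((Fin m → ℝ) × Module.Dual ℝ (Fin m → ℝ))}
    (hK : W.map (Kmap m) = W) {v : (Fin m → ℝ) × Module.Dual ℝ (Fin m → ℝ)} (hv : v ∈ W) :
    ((v.1, 0) : (Fin m → ℝ) × Module.Dual ℝ (Fin m → ℝ)) ∈ W ∧
      ((0, v.2) : (Fin m → ℝ) × Module.Dual ℝ (Fin m → ℝ)) ∈ W := by
  have hKv : Kmap m v ∈ W := hK ▸ Submodule.mem_map_of_mem hv
  have h1 : Kmap m v = (v.1, -v.2) := by
    simp [Kmap]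
  rw [h1] at hKv
  constructor
  · have hmem := W.smul_mem (2⁻¹ : ℝ) (W.add_mem hv hKv)
    have heq : ((v.1, 0) : (Fin m → ℝ) × Module.Dual ℝ (Fin m → ℝ))
        = (2⁻¹ : ℝ) • (v + (v.1, -v.2)) := by
      rw [Prod.ext_iff]
      constructor
      · show v.1 = (2⁻¹ : ℝ) • (v.1 + v.1)
        module
      · show (0 : Module.Dual ℝ (Fin m → ℝ)) = (2⁻¹ : ℝ) • (v.2 + -v.2)
        simp
    rw [heq]; exact hmem
  · have hmem := W.smul_mem (2⁻¹ : ℝ) (W.sub_mem hv hKv)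
    have heq : ((0, v.2) : (Fin m → ℝ) × Module.Dual ℝ (Fin m → ℝ))
        = (2⁻¹ : ℝ) • (v - (v.1, -v.2)) := by
      rw [Prod.ext_iff]
      constructor
      · show (0 : Fin m → ℝ) = (2⁻¹ : ℝ) • (v.1 - v.1)
        simp
      · show v.2 = (2⁻¹ : ℝ) • (v.2 - -v.2)
        module
    rw [heq]; exact hmem

end Stmt2Aux

open Stmt2Aux

/-- the map (L, H) ↦ (L × {0}) ⊔ ({0} × Ann(H)) is a bijection from the
set of flags L ⊆ H ⊆ ℝ^{n+2} with dim L = 1, dim H = n+1 onto the set of 2-dimensional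
K-invariant totally isotropic subspaces of V = ℝ^{n+2} × (ℝ^{n+2})* having nontrivial
intersection with both factors (the para-complex null-lines). -/
theorem stmt_2 (n : ℕ) (hn : 1 ≤ n) :
    Set.BijOn
      (fun LH : Submodule ℝ (Fin (n+2) → ℝ) × Submodule ℝ (Fin (n+2) → ℝ) =>
        (LH.1.map (LinearMap.inl ℝ (Fin (n+2) → ℝ) (Module.Dual ℝ (Fin (n+2) → ℝ)))) ⊔
          ((LH.2.dualAnnihilator).map
            (LinearMap.inr ℝ (Fin (n+2) → ℝ) (Module.Dual ℝ (Fin (n+2) → ℝ)))))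
      {LH : Submodule ℝ (Fin (n+2) → ℝ) × Submodule ℝ (Fin (n+2) → ℝ) |
        LH.1 ≤ LH.2 ∧ Module.finrank ℝ LH.1 = 1 ∧ Module.finrank ℝ LH.2 = n + 1}
      {W : Submodule ℝ ((Fin (n+2) → ℝ) × Module.Dual ℝ (Fin (n+2) → ℝ)) |
        Module.finrank ℝ W = 2 ∧
        W.map (Kmap (n+2)) = W ∧
        (∀ v ∈ W, ∀ w ∈ W, Bfun (n+2) v w = 0) ∧
        W ⊓ LinearMap.range
          (LinearMap.inl ℝ (Fin (n+2) → ℝ) (Module.Dual ℝ (Fin (n+2) → ℝ))) ≠ ⊥ ∧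
        W ⊓ LinearMap.range
          (LinearMap.inr ℝ (Fin (n+2) → ℝ) (Module.Dual ℝ (Fin (n+2) → ℝ))) ≠ ⊥} := by
  have hfr : finrank ℝ (Fin (n+2) → ℝ) = n + 2 := by simp
  refine ⟨?_, ?_, ?_⟩
  · -- MapsTo
    rintro ⟨L, H⟩ ⟨hLH, hL, hH⟩
    have hA : finrank ℝ H.dualAnnihilator = 1 := by
      have h1 := Subspace.finrank_add_finrank_dualCoannihilator_eq H.dualAnnihilator
      rw [Subspace.dualAnnihilator_dualCoannihilator_eq, hH, hfr] at h1
      omega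
    refine ⟨?_, ?_, ?_, ?_, ?_⟩
    · rw [finrank_sup_eq, hL, hA]
    · show Submodule.map (Kmap (n+2)) (L.map (il (n+2)) ⊔ _) = _
      rw [Submodule.map_sup, ← Submodule.map_comp, ← Submodule.map_comp]
      have h1 : (Kmap (n+2)).comp (il (n+2)) = il (n+2) := by
        refine LinearMap.ext fun x => ?_
        simp [Kmap]
      have h2 : (Kmap (n+2)).comp (ir (n+2)) = -(ir (n+2)) := by
        refine LinearMap.ext fun ξ => ?_
        simp [Kmap]
      rw [h1, h2, Submodule.map_neg]
    · intro v hv w hw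
      rw [mem_sup_iff] at hv hw
      show v.2 w.1 + w.2 v.1 = 0
      rw [Submodule.mem_dualAnnihilator] at hv hw
      rw [hv.2 w.1 (hLH hw.1), hw.2 v.1 (hLH hv.1), add_zero]
    · -- nontrivial intersection with range inl
      obtain ⟨x, hx, hx0⟩ := Submodule.exists_mem_ne_zero_of_ne_bot
        (by intro h; rw [h] at hL; simp at hL : L ≠ ⊥)
      rw [Submodule.ne_bot_iff]
      refine ⟨(x, 0), ⟨?_, ?_⟩, ?_⟩
      · exact (mem_sup_iff L H.dualAnnihilator (x, 0)).mpr ⟨hx, Submodule.zero_mem _⟩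
      · exact ⟨x, rfl⟩
      · simp [Prod.ext_iff, hx0]
    · obtain ⟨ξ, hξ, hξ0⟩ := Submodule.exists_mem_ne_zero_of_ne_bot
        (by intro h; rw [h] at hA; simp at hA : H.dualAnnihilator ≠ ⊥)
      rw [Submodule.ne_bot_iff]
      refine ⟨(0, ξ), ⟨?_, ?_⟩, ?_⟩
      · exact (mem_sup_iff L H.dualAnnihilator (0, ξ)).mpr ⟨Submodule.zero_mem _, hξ⟩
      · exact ⟨ξ, rfl⟩
      · simp [Prod.ext_iff, hξ0]
  · -- InjOn
    rintro ⟨L, H⟩ ⟨hLH, hL, hH⟩ ⟨L', H'⟩ ⟨hLH', hL', hH'⟩ heq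
    simp only at heq
    have key : ∀ v : (Fin (n+2) → ℝ) × Module.Dual ℝ (Fin (n+2) → ℝ),
        (v.1 ∈ L ∧ v.2 ∈ H.dualAnnihilator) ↔ (v.1 ∈ L' ∧ v.2 ∈ H'.dualAnnihilator) := by
      intro v
      rw [← mem_sup_iff, ← mem_sup_iff, heq]
    have hLe : L = L' := by
      ext x
      have := key (x, 0)
      simpa using this
    have hAe : H.dualAnnihilator = H'.dualAnnihilator := by
      ext ξ
      have := key (0, ξ)
      simpa using this
    have hHe : H = H' := by
      have h2 := congrArg Submodule.dualCoannihilator hAe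
      rwa [Subspace.dualAnnihilator_dualCoannihilator_eq,
        Subspace.dualAnnihilator_dualCoannihilator_eq] at h2
    rw [Prod.ext_iff]
    exact ⟨hLe, hHe⟩
  · -- SurjOn
    rintro W ⟨h2, hKW, hiso, hl, hr⟩
    set L := W.comap (il (n+2)) with hLdef
    set A := W.comap (ir (n+2)) with hAdef
    have hWdec : W = L.map (il (n+2)) ⊔ A.map (ir (n+2)) := by
      apply le_antisymm
      · intro v hv
        rw [mem_sup_iff]
        obtain ⟨hv1, hv2⟩ := decomp hKW hv
        exact ⟨hv1, hv2⟩
      · exact sup_le (Submodule.map_comap_le _ _) (Submodule.map_comap_le _ _)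
    have hLne : L ≠ ⊥ := by
      intro h0
      apply hl
      rw [eq_bot_iff]
      rintro v ⟨hvW, x, rfl⟩
      have : x ∈ L := hvW
      rw [h0] at this
      simp only [Submodule.mem_bot] at this
      simp [this]
    have hAne : A ≠ ⊥ := by
      intro h0
      apply hr
      rw [eq_bot_iff]
      rintro v ⟨hvW, ξ, rfl⟩
      have : ξ ∈ A := hvW
      rw [h0] at this
      simp only [Submodule.mem_bot] at this
      simp [this]
    have hsum : finrank ℝ L + finrank ℝ A = 2 := by
      rw [← finrank_sup_eq, ← hWdec, h2]
    have hLpos : 0 < finrank ℝ L := Module.finrank_pos_iff.mpr (Submodule.nontrivial_iff_ne_bot.mpr hLne)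
    have hApos : 0 < finrank ℝ A := Module.finrank_pos_iff.mpr (Submodule.nontrivial_iff_ne_bot.mpr hAne)
    have hL1 : finrank ℝ L = 1 := by omega
    have hA1 : finrank ℝ A = 1 := by omega
    set H := A.dualCoannihilator with hHdef
    have hAann : H.dualAnnihilator = A := Subspace.dualCoannihilator_dualAnnihilator_eq
    have hH1 : finrank ℝ H = n + 1 := by
      have h3 := Subspace.finrank_add_finrank_dualCoannihilator_eq A
      rw [hfr, hA1, ← hHdef] at h3
      omega
    have hLeH : L ≤ H := by
      intro x hx
      rw [Submodule.mem_dualCoannihilator]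
      intro ξ hξ
      have hxW : ((x, 0) : (Fin (n+2) → ℝ) × Module.Dual ℝ (Fin (n+2) → ℝ)) ∈ W := hx
      have hξW : ((0, ξ) : (Fin (n+2) → ℝ) × Module.Dual ℝ (Fin (n+2) → ℝ)) ∈ W := hξ
      have := hiso _ hxW _ hξW
      simpa [Bfun] using this
    exact ⟨(L, H), ⟨hLeH, hL1, hH1⟩, by simp only; rw [hAann, ← hWdec]⟩
end

section
/- Let n ≥ 1 and let V := ℝ^{n+2} × (ℝ^{n+2})* with B((x,ξ),(y,η)) := ξ(y) + η(x) and K(x,ξ) := (x,−ξ). Let U := span{(e₀,0), (e_{n+1},0), (0,e⁰), (0,e^{n+1})} ⊆ V (a nondegenerate para-complex plane). Then the set of 2-dimensional K-invariant totally isotropic subspaces W of U with W ∩ (ℝ^{n+2} × {0}) ≠ 0 and W ∩ ({0} × (ℝ^{n+2})*) ≠ 0 is exactly { span{(e₀ + t e_{n+1}, 0), (0, e^{n+1} − t e⁰)} : t ∈ ℝ } ∪ { span{(e_{n+1}, 0), (0, e⁰)} }. (This one-parameter closed family is the model chain determined by U.) -/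
/-- The coordinate functional e^i on ℝ^m. -/
noncomputable def prj (m : ℕ) (i : Fin m) : Module.Dual ℝ (Fin m → ℝ) :=
  LinearMap.proj i

/-- The basis vector e_i of ℝ^m. -/
noncomputable def bas (m : ℕ) (i : Fin m) : Fin m → ℝ :=
  Pi.single i (1 : ℝ)

abbrev Vsp (m : ℕ) := (Fin m → ℝ) × Module.Dual ℝ (Fin m → ℝ)

lemma span_pair_smul {M : Type*} [AddCommGroup M] [Module ℝ M] (u v : M) {c d : ℝ}
    (hc : c ≠ 0) (hd : d ≠ 0) :
    Submodule.span ℝ {c • u, d • v} = Submodule.span ℝ {u, v} := by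
  rw [Submodule.span_insert, Submodule.span_insert,
    Submodule.span_singleton_smul_eq (isUnit_iff_ne_zero.2 hc),
    show Submodule.span ℝ {d • v} = Submodule.span ℝ {v} from
      Submodule.span_singleton_smul_eq (isUnit_iff_ne_zero.2 hd) v]

lemma mem_quad {M : Type*} [AddCommGroup M] [Module ℝ M] {p q r s w : M}
    (h : w ∈ Submodule.span ℝ {p, q, r, s}) :
    ∃ a b c d : ℝ, w = a • p + b • q + c • r + d • s := by
  rw [Submodule.mem_span_insert] at h
  obtain ⟨a, z1, hz1, rfl⟩ := h
  rw [Submodule.mem_span_insert] at hz1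
  obtain ⟨b, z2, hz2, rfl⟩ := hz1
  rw [Submodule.mem_span_insert] at hz2
  obtain ⟨c, z3, hz3, rfl⟩ := hz2
  rw [Submodule.mem_span_singleton] at hz3
  obtain ⟨d, rfl⟩ := hz3
  exact ⟨a, b, c, d, by abel⟩

lemma li_pair {m : ℕ} {x : Fin m → ℝ} {ξ : Module.Dual ℝ (Fin m → ℝ)}
    (hx : x ≠ 0) (hξ : ξ ≠ 0) :
    LinearIndependent ℝ ![((x, 0) : Vsp m), (0, ξ)] := by
  rw [LinearIndependent.pair_iff]
  intro s t h
  have h1 : s • x = 0 := by simpa using congrArg Prod.fst h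
  have h2 : t • ξ = 0 := by simpa using congrArg Prod.snd h
  exact ⟨(smul_eq_zero.1 h1).resolve_right hx, (smul_eq_zero.1 h2).resolve_right hξ⟩

lemma finrank_pair {m : ℕ} {x : Fin m → ℝ} {ξ : Module.Dual ℝ (Fin m → ℝ)}
    (hx : x ≠ 0) (hξ : ξ ≠ 0) :
    Module.finrank ℝ (Submodule.span ℝ {((x, 0) : Vsp m), (0, ξ)}) = 2 := by
  have h := finrank_span_eq_card (li_pair hx hξ)
  rw [Matrix.range_cons_cons_empty] at h
  simpa using h

lemma mapK_span {m : ℕ} (x : Fin m → ℝ) (ξ : Module.Dual ℝ (Fin m → ℝ)) :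
    (Submodule.span ℝ {((x, 0) : Vsp m), (0, ξ)}).map (Kmap m)
      = Submodule.span ℝ {((x, 0) : Vsp m), (0, ξ)} := by
  rw [Submodule.map_span, Set.image_pair]
  have h1 : Kmap m (x, 0) = (1 : ℝ) • ((x, 0) : Vsp m) := by
    simp [Kmap, Prod.ext_iff]
  have h2 : Kmap m (0, ξ) = (-1 : ℝ) • ((0, ξ) : Vsp m) := by
    rw [Prod.ext_iff]
    exact ⟨by simp [Kmap], by simp [Kmap]; exact (neg_one_smul ℝ ξ).symm⟩
  rw [h1, h2, span_pair_smul _ _ one_ne_zero (by norm_num : (-1:ℝ) ≠ 0)]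

lemma null_span {m : ℕ} (x : Fin m → ℝ) (ξ : Module.Dual ℝ (Fin m → ℝ)) (hB : ξ x = 0) :
    ∀ v ∈ Submodule.span ℝ {((x, 0) : Vsp m), (0, ξ)},
      ∀ w ∈ Submodule.span ℝ {((x, 0) : Vsp m), (0, ξ)}, Bfun m v w = 0 := by
  intro v hv w hw
  rw [Submodule.mem_span_pair] at hv hw
  obtain ⟨a, b, rfl⟩ := hv
  obtain ⟨c, d, rfl⟩ := hw
  simp [Bfun, hB]

lemma inl_ne {m : ℕ} {x : Fin m → ℝ} (ξ : Module.Dual ℝ (Fin m → ℝ)) (hx : x ≠ 0) :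
    Submodule.span ℝ {((x, 0) : Vsp m), (0, ξ)}
      ⊓ LinearMap.range (LinearMap.inl ℝ (Fin m → ℝ) (Module.Dual ℝ (Fin m → ℝ))) ≠ ⊥ := by
  rw [Submodule.ne_bot_iff]
  refine ⟨(x, 0), Submodule.mem_inf.2 ⟨Submodule.subset_span (by simp), ⟨x, rfl⟩⟩, ?_⟩
  simp [Prod.ext_iff, hx]

lemma inr_ne {m : ℕ} (x : Fin m → ℝ) {ξ : Module.Dual ℝ (Fin m → ℝ)} (hξ : ξ ≠ 0) :
    Submodule.span ℝ {((x, 0) : Vsp m), (0, ξ)}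
      ⊓ LinearMap.range (LinearMap.inr ℝ (Fin m → ℝ) (Module.Dual ℝ (Fin m → ℝ))) ≠ ⊥ := by
  rw [Submodule.ne_bot_iff]
  refine ⟨(0, ξ), Submodule.mem_inf.2 ⟨Submodule.subset_span (by simp), ⟨ξ, rfl⟩⟩, ?_⟩
  simp [Prod.ext_iff, hξ]

lemma prj_bas {m : ℕ} (i j : Fin m) : prj m i (bas m j) = if i = j then 1 else 0 := by
  simp [prj, bas, Pi.single_apply]

lemma bas_ne {m : ℕ} (j : Fin m) : bas m j ≠ 0 := by
  intro h
  have := congrFun h j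
  simp [bas] at this

lemma prj_ne {m : ℕ} (i : Fin m) : prj m i ≠ 0 := by
  intro h
  have := congrArg (fun f => f (bas m i)) h
  simp [prj_bas] at this


set_option maxHeartbeats 1600000 in
/-- inside the nondegenerate para-complex plane
U = ⟨(e₀,0), (e_{n+1},0), (0,e⁰), (0,e^{n+1})⟩, the para-complex null-lines are exactly
the one-parameter closed family span{(e₀+t·e_{n+1},0),(0,e^{n+1}−t·e⁰)}, t ∈ ℝ, together
with span{(e_{n+1},0),(0,e⁰)}: the model chain determined by U. -/
theorem stmt_7 (n : ℕ) (hn : 1 ≤ n) :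
    {W : Submodule ℝ ((Fin (n+2) → ℝ) × Module.Dual ℝ (Fin (n+2) → ℝ)) |
        W ≤ Submodule.span ℝ {((bas (n+2) 0, 0) :
            (Fin (n+2) → ℝ) × Module.Dual ℝ (Fin (n+2) → ℝ)),
          (bas (n+2) (Fin.last (n+1)), 0), (0, prj (n+2) 0),
          (0, prj (n+2) (Fin.last (n+1)))} ∧
        Module.finrank ℝ W = 2 ∧
        W.map (Kmap (n+2)) = W ∧
        (∀ v ∈ W, ∀ w ∈ W, Bfun (n+2) v w = 0) ∧
        W ⊓ LinearMap.range
          (LinearMap.inl ℝ (Fin (n+2) → ℝ) (Module.Dual ℝ (Fin (n+2) → ℝ))) ≠ ⊥ ∧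
        W ⊓ LinearMap.range
          (LinearMap.inr ℝ (Fin (n+2) → ℝ) (Module.Dual ℝ (Fin (n+2) → ℝ))) ≠ ⊥}
      = (Set.range fun t : ℝ =>
          Submodule.span ℝ {((bas (n+2) 0 + t • bas (n+2) (Fin.last (n+1)), 0) :
              (Fin (n+2) → ℝ) × Module.Dual ℝ (Fin (n+2) → ℝ)),
            (0, prj (n+2) (Fin.last (n+1)) - t • prj (n+2) 0)})
        ∪ {Submodule.span ℝ {((bas (n+2) (Fin.last (n+1)), 0) :
              (Fin (n+2) → ℝ) × Module.Dual ℝ (Fin (n+2) → ℝ)),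
            (0, prj (n+2) 0)}} := by
  have hL : (Fin.last (n+1) : Fin (n+2)) ≠ 0 := by
    simp [Fin.ext_iff]
  have hL' : (0 : Fin (n+2)) ≠ Fin.last (n+1) := Ne.symm hL
  ext W
  simp only [Set.mem_setOf_eq, Set.mem_union, Set.mem_range, Set.mem_singleton_iff]
  constructor
  · rintro ⟨hU, hrk, -, hNull, hinl, hinr⟩
    obtain ⟨u, hu, hu0⟩ := Submodule.exists_mem_ne_zero_of_ne_bot hinl
    obtain ⟨v, hv, hv0⟩ := Submodule.exists_mem_ne_zero_of_ne_bot hinr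
    obtain ⟨huW, hur⟩ := Submodule.mem_inf.1 hu
    obtain ⟨hvW, hvr⟩ := Submodule.mem_inf.1 hv
    obtain ⟨x, hxu⟩ := LinearMap.mem_range.1 hur
    obtain ⟨ξ, hxv⟩ := LinearMap.mem_range.1 hvr
    have hux : u = ((x, 0) : Vsp (n+2)) := by rw [← hxu, LinearMap.inl_apply]
    have hvx : v = ((0, ξ) : Vsp (n+2)) := by rw [← hxv, LinearMap.inr_apply]
    subst hux hvx
    have hxne : x ≠ 0 := by rintro rfl; exact hu0 rfl
    have hξne : ξ ≠ 0 := by rintro rfl; exact hv0 rfl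
    obtain ⟨a, b, c, d, he⟩ := mem_quad (hU huW)
    obtain ⟨a', b', c', d', he'⟩ := mem_quad (hU hvW)
    have hx1 : x = a • bas (n+2) 0 + b • bas (n+2) (Fin.last (n+1)) := by
      simpa using congrArg Prod.fst he
    have hξ1 : ξ = c' • prj (n+2) 0 + d' • prj (n+2) (Fin.last (n+1)) := by
      simpa using congrArg Prod.snd he'
    have hB : ξ x = 0 := by
      simpa [Bfun] using hNull ((x, 0)) huW ((0, ξ)) hvW
    have hE : c' * a + d' * b = 0 := by
      have h := hB
      rw [hx1, hξ1] at h
      simp [prj_bas, hL, hL'] at h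
      linarith
    have hSle : Submodule.span ℝ {((x, 0) : Vsp (n+2)), (0, ξ)} ≤ W := by
      rw [Submodule.span_le, Set.insert_subset_iff, Set.singleton_subset_iff]
      exact ⟨huW, hvW⟩
    have hSW : Submodule.span ℝ {((x, 0) : Vsp (n+2)), (0, ξ)} = W :=
      Submodule.eq_of_le_of_finrank_eq hSle (by rw [finrank_pair hxne hξne, hrk])
    by_cases ha : a = 0
    · right
      subst ha
      have hb : b ≠ 0 := by rintro rfl; apply hxne; rw [hx1]; simp
      have hd' : d' = 0 := by
        have h : d' * b = 0 := by linarith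
        exact (mul_eq_zero.1 h).resolve_right hb
      have hc' : c' ≠ 0 := by rintro rfl; apply hξne; rw [hξ1, hd']; simp
      rw [← hSW]
      have e1 : ((x, 0) : Vsp (n+2))
          = b • ((bas (n+2) (Fin.last (n+1)), 0) : Vsp (n+2)) := by
        rw [hx1, Prod.ext_iff]
        constructor <;> simp
      have e2 : ((0, ξ) : Vsp (n+2)) = c' • ((0, prj (n+2) 0) : Vsp (n+2)) := by
        rw [hξ1, hd', Prod.ext_iff]
        constructor <;> simp
      rw [e1, e2, span_pair_smul _ _ hb hc']
    · left
      refine ⟨b / a, ?_⟩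
      have hd' : d' ≠ 0 := by
        rintro rfl
        have hc0 : c' = 0 := by
          have h : c' * a = 0 := by linarith
          exact (mul_eq_zero.1 h).resolve_right ha
        apply hξne; rw [hξ1, hc0]; simp
      have hc'e : c' = -(d' * (b / a)) := by
        field_simp
        linarith
      rw [← hSW]
      have e1 : ((x, 0) : Vsp (n+2))
          = a • ((bas (n+2) 0 + (b / a) • bas (n+2) (Fin.last (n+1)), 0) : Vsp (n+2)) := by
        rw [hx1, Prod.ext_iff]
        constructor
        · rw [Prod.smul_fst]
          simp only [smul_add, smul_smul]
          rw [mul_div_cancel₀ _ ha]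
        · simp
      have e2 : ((0, ξ) : Vsp (n+2)) = d' •
          ((0, prj (n+2) (Fin.last (n+1)) - (b / a) • prj (n+2) 0) : Vsp (n+2)) := by
        rw [hξ1, hc'e, Prod.ext_iff]
        constructor
        · simp
        · rw [Prod.smul_snd]
          simp only [smul_sub, smul_smul]
          module
      rw [e1, e2, span_pair_smul _ _ ha hd']
  · rintro (⟨t, rfl⟩ | rfl)
    · have hx : bas (n+2) 0 + t • bas (n+2) (Fin.last (n+1)) ≠ 0 := by
        intro h
        have := congrFun h 0
        simp [bas, Pi.single_eq_same, Pi.single_eq_of_ne hL'] at this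
      have hξ : prj (n+2) (Fin.last (n+1)) - t • prj (n+2) 0 ≠ 0 := by
        intro h
        have := congrArg (fun f => f (bas (n+2) (Fin.last (n+1)))) h
        simp [prj_bas, hL, hL'] at this
      have hB : (prj (n+2) (Fin.last (n+1)) - t • prj (n+2) 0)
          (bas (n+2) 0 + t • bas (n+2) (Fin.last (n+1))) = 0 := by
        simp [prj_bas, hL, hL', map_add, map_smul]
      refine ⟨?_, finrank_pair hx hξ, mapK_span _ _, null_span _ _ hB, inl_ne _ hx, inr_ne _ hξ⟩
      rw [Submodule.span_le, Set.insert_subset_iff, Set.singleton_subset_iff]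
      constructor
      · have e : ((bas (n+2) 0 + t • bas (n+2) (Fin.last (n+1)), 0) : Vsp (n+2))
            = ((bas (n+2) 0, 0) : Vsp (n+2)) + t • ((bas (n+2) (Fin.last (n+1)), 0) : Vsp (n+2)) := by
          rw [Prod.ext_iff]; constructor <;> simp
        rw [e]
        exact Submodule.add_mem _ (Submodule.subset_span (by simp))
          (Submodule.smul_mem _ _ (Submodule.subset_span (by simp)))
      · have e : ((0, prj (n+2) (Fin.last (n+1)) - t • prj (n+2) 0) : Vsp (n+2))
            = ((0, prj (n+2) (Fin.last (n+1))) : Vsp (n+2)) - t • ((0, prj (n+2) 0) : Vsp (n+2)) := by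
          rw [Prod.ext_iff]; constructor <;> simp
        rw [e]
        exact Submodule.sub_mem _ (Submodule.subset_span (by simp))
          (Submodule.smul_mem _ _ (Submodule.subset_span (by simp)))
    · have hx : bas (n+2) (Fin.last (n+1)) ≠ 0 := bas_ne _
      have hξ : prj (n+2) 0 ≠ 0 := prj_ne _
      have hB : prj (n+2) 0 (bas (n+2) (Fin.last (n+1))) = 0 := by
        simp [prj_bas, hL']
      refine ⟨?_, finrank_pair hx hξ, mapK_span _ _, null_span _ _ hB, inl_ne _ hx, inr_ne _ hξ⟩
      rw [Submodule.span_le, Set.insert_subset_iff, Set.singleton_subset_iff]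
      exact ⟨Submodule.subset_span (by simp), Submodule.subset_span (by simp)⟩
end

section
/- Let n ≥ 1 and let V := ℝ^{n+2} × (ℝ^{n+2})* with B((x,ξ),(y,η)) := ξ(y) + η(x) and K(x,ξ) := (x,−ξ). Call a subspace U ⊆ V a nondegenerate para-complex plane if dim U = 4, K(U) = U, dim(U ∩ (ℝ^{n+2}×{0})) = 2 = dim(U ∩ ({0}×(ℝ^{n+2})*)), and B restricted to U is nondegenerate. Let W₁ ≠ W₂ be two para-complex null-lines of V, i.e. 2-dimensional K-invariant totally isotropic subspaces with nonzero intersection with both ℝ^{n+2}×{0} and {0}×(ℝ^{n+2})*. Then the following are equivalent: (i) there exists a nondegenerate para-complex plane U with W₁ ⊆ U and W₂ ⊆ U; (ii) W₁ + W₂ is a nondegenerate para-complex plane. Moreover, in that case U = W₁ + W₂, so U is unique. -/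
/-- A para-complex null-line of V = ℝ^m × (ℝ^m)*: a 2-dimensional K-invariant totally
isotropic subspace meeting both factors nontrivially. -/
def IsPCNullLine (m : ℕ)
    (W : Submodule ℝ ((Fin m → ℝ) × Module.Dual ℝ (Fin m → ℝ))) : Prop :=
  Module.finrank ℝ W = 2 ∧
  W.map (Kmap m) = W ∧
  (∀ v ∈ W, ∀ w ∈ W, Bfun m v w = 0) ∧
  W ⊓ LinearMap.range (LinearMap.inl ℝ (Fin m → ℝ) (Module.Dual ℝ (Fin m → ℝ))) ≠ ⊥ ∧
  W ⊓ LinearMap.range (LinearMap.inr ℝ (Fin m → ℝ) (Module.Dual ℝ (Fin m → ℝ))) ≠ ⊥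

/-- A nondegenerate para-complex plane of V = ℝ^m × (ℝ^m)*: a 4-dimensional K-invariant
subspace meeting each factor in dimension 2, on which B is nondegenerate. -/
def IsNondegPlane (m : ℕ)
    (U : Submodule ℝ ((Fin m → ℝ) × Module.Dual ℝ (Fin m → ℝ))) : Prop :=
  Module.finrank ℝ U = 4 ∧
  U.map (Kmap m) = U ∧
  Module.finrank ℝ
    (U ⊓ LinearMap.range (LinearMap.inl ℝ (Fin m → ℝ) (Module.Dual ℝ (Fin m → ℝ))) :
      Submodule ℝ _) = 2 ∧
  Module.finrank ℝ
    (U ⊓ LinearMap.range (LinearMap.inr ℝ (Fin m → ℝ) (Module.Dual ℝ (Fin m → ℝ))) :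
      Submodule ℝ _) = 2 ∧
  (∀ v ∈ U, (∀ w ∈ U, Bfun m v w = 0) → v = 0)

namespace Stmt9Aux

abbrev Vm (m : ℕ) := (Fin m → ℝ) × Module.Dual ℝ (Fin m → ℝ)

noncomputable abbrev Ep (m : ℕ) : Submodule ℝ (Vm m) :=
  LinearMap.range (LinearMap.inl ℝ (Fin m → ℝ) (Module.Dual ℝ (Fin m → ℝ)))
noncomputable abbrev Em' (m : ℕ) : Submodule ℝ (Vm m) :=
  LinearMap.range (LinearMap.inr ℝ (Fin m → ℝ) (Module.Dual ℝ (Fin m → ℝ)))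

lemma mem_Ep {m : ℕ} {v : Vm m} : v ∈ Ep m ↔ v.2 = 0 := by
  show v ∈ LinearMap.range _ ↔ _
  rw [LinearMap.range_inl, LinearMap.mem_ker]; rfl

lemma mem_Em {m : ℕ} {v : Vm m} : v ∈ Em' m ↔ v.1 = 0 := by
  show v ∈ LinearMap.range _ ↔ _
  rw [LinearMap.range_inr, LinearMap.mem_ker]; rfl

lemma Ep_inf_Em (m : ℕ) : Ep m ⊓ Em' m = ⊥ :=
  (LinearMap.isCompl_range_inl_inr).inf_eq_bot

lemma Kmap_apply {m : ℕ} (v : Vm m) : Kmap m v = (v.1, -v.2) := rfl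

lemma Bfun_symm {m : ℕ} (v w : Vm m) : Bfun m v w = Bfun m w v := by
  simp [Bfun]; ring

lemma Bfun_add_right {m : ℕ} (v a b : Vm m) :
    Bfun m v (a + b) = Bfun m v a + Bfun m v b := by
  simp [Bfun]; ring


/-- A K-invariant subspace splits along the eigenspaces. -/
lemma decomp {m : ℕ} {W : Submodule ℝ (Vm m)} (hW : W.map (Kmap m) = W) :
    W = (W ⊓ Ep m) ⊔ (W ⊓ Em' m) := by
  refine le_antisymm ?_ (sup_le inf_le_left inf_le_left)
  intro w hw
  have hKw : Kmap m w ∈ W := hW ▸ Submodule.mem_map_of_mem hw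
  have hp : ((w.1, 0) : Vm m) ∈ W := by
    have : ((w.1, 0) : Vm m) = (2⁻¹ : ℝ) • (w + Kmap m w) := by
      rw [Kmap_apply, Prod.ext_iff]
      constructor
      · show w.1 = (2⁻¹ : ℝ) • (w.1 + w.1)
        funext i
        simp only [Pi.smul_apply, Pi.add_apply, smul_eq_mul]; ring
      · show (0 : Module.Dual ℝ (Fin m → ℝ)) = (2⁻¹ : ℝ) • (w.2 + -w.2)
        simp
    rw [this]
    exact W.smul_mem _ (W.add_mem hw hKw)
  have hq : ((0, w.2) : Vm m) ∈ W := by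
    have : ((0, w.2) : Vm m) = (2⁻¹ : ℝ) • (w - Kmap m w) := by
      rw [Kmap_apply, Prod.ext_iff]
      constructor
      · show (0 : Fin m → ℝ) = (2⁻¹ : ℝ) • (w.1 - w.1)
        simp
      · show w.2 = (2⁻¹ : ℝ) • (w.2 - -w.2)
        refine LinearMap.ext fun x => ?_
        simp only [LinearMap.smul_apply, LinearMap.sub_apply, LinearMap.neg_apply,
          smul_eq_mul]
        ring
    rw [this]
    exact W.smul_mem _ (W.sub_mem hw hKw)
  have hww : w = (w.1, 0) + (0, w.2) := by
    rw [Prod.ext_iff]; constructor <;> simp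
  rw [hww]
  exact Submodule.add_mem _
    (Submodule.mem_sup_left ⟨hp, mem_Ep.mpr rfl⟩)
    (Submodule.mem_sup_right ⟨hq, mem_Em.mpr rfl⟩)

lemma finrank_pos_of_ne_bot {m : ℕ} {W : Submodule ℝ (Vm m)} (h : W ≠ ⊥) :
    0 < Module.finrank ℝ W :=
  Nat.pos_of_ne_zero fun h0 => h (Submodule.finrank_eq_zero.mp h0)

/-- Two distinct lines inside a plane span the plane. -/
lemma sup_lines {m : ℕ} {L₁ L₂ A : Submodule ℝ (Vm m)}
    (h1 : Module.finrank ℝ L₁ = 1) (h2 : Module.finrank ℝ L₂ = 1) (hne : L₁ ≠ L₂)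
    (hA : Module.finrank ℝ A = 2) (le1 : L₁ ≤ A) (le2 : L₂ ≤ A) : L₁ ⊔ L₂ = A := by
  have hinf : L₁ ⊓ L₂ = ⊥ := by
    by_contra hb
    have h0 : 0 < Module.finrank ℝ (L₁ ⊓ L₂ : Submodule ℝ _) := finrank_pos_of_ne_bot hb
    have hle : Module.finrank ℝ (L₁ ⊓ L₂ : Submodule ℝ _) ≤ 1 :=
      h1 ▸ Submodule.finrank_mono inf_le_left
    have heq1 : (L₁ ⊓ L₂ : Submodule ℝ _) = L₁ :=
      Submodule.eq_of_le_of_finrank_eq inf_le_left (by omega)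
    have hll : L₁ ≤ L₂ := heq1 ▸ inf_le_right
    exact hne (Submodule.eq_of_le_of_finrank_eq hll (h1.trans h2.symm))
  have hsum := Submodule.finrank_sup_add_finrank_inf_eq L₁ L₂
  rw [hinf] at hsum
  simp only [finrank_bot] at hsum
  rw [h1, h2] at hsum
  exact Submodule.eq_of_le_of_finrank_eq (sup_le le1 le2) (by omega)

lemma Bzero_sup {m : ℕ} {v : Vm m} {P Q : Submodule ℝ (Vm m)}
    (hP : ∀ w ∈ P, Bfun m v w = 0) (hQ : ∀ w ∈ Q, Bfun m v w = 0) :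
    ∀ w ∈ P ⊔ Q, Bfun m v w = 0 := by
  intro w hw
  rcases Submodule.mem_sup.mp hw with ⟨a, ha, b, hb, rfl⟩
  rw [Bfun_add_right, hP a ha, hQ b hb, add_zero]

lemma Bzero_Ep {m : ℕ} {v w : Vm m} (hv : v ∈ Ep m) (hw : w ∈ Ep m) :
    Bfun m v w = 0 := by
  have h1 := mem_Ep.mp hv
  have h2 := mem_Ep.mp hw
  simp [Bfun, h1, h2]

lemma Bzero_Em {m : ℕ} {v w : Vm m} (hv : v ∈ Em' m) (hw : w ∈ Em' m) :
    Bfun m v w = 0 := by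
  have h1 := mem_Em.mp hv
  have h2 := mem_Em.mp hw
  simp [Bfun, h1, h2]

lemma inf_eigen_bot {m : ℕ} (S T : Submodule ℝ (Vm m)) :
    (S ⊓ Ep m) ⊓ (T ⊓ Em' m) = ⊥ := by
  rw [Submodule.eq_bot_iff]
  rintro x ⟨⟨_, hxp⟩, ⟨_, hxm⟩⟩
  have h1 := mem_Ep.mp hxp
  have h2 := mem_Em.mp hxm
  rw [Prod.ext_iff]
  exact ⟨h2, h1⟩

/-- Key lemma: a nondegenerate plane containing two distinct null lines equals their sum. -/
lemma key {m : ℕ} {U W₁ W₂ : Submodule ℝ (Vm m)}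
    (hU : IsNondegPlane m U) (h1 : IsPCNullLine m W₁) (h2 : IsPCNullLine m W₂)
    (hne : W₁ ≠ W₂) (hle1 : W₁ ≤ U) (hle2 : W₂ ≤ U) : U = W₁ ⊔ W₂ := by
  obtain ⟨hU4, hUK, hUp, hUm, hUnd⟩ := hU
  obtain ⟨hW1d, hW1K, hW1iso, hW1p, hW1m⟩ := h1
  obtain ⟨hW2d, hW2K, hW2iso, hW2p, hW2m⟩ := h2
  set A := U ⊓ Ep m with hAdef
  set B := U ⊓ Em' m with hBdef
  have hABbot : A ⊓ B = ⊥ := inf_eigen_bot U U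
  have hABsum := Submodule.finrank_sup_add_finrank_inf_eq A B
  rw [hABbot] at hABsum
  simp only [finrank_bot] at hABsum
  rw [hUp, hUm] at hABsum
  have h4 : Module.finrank ℝ (A ⊔ B : Submodule ℝ (Vm m)) = 4 := by omega
  have hUAB : A ⊔ B = U :=
    Submodule.eq_of_le_of_finrank_eq (sup_le inf_le_left inf_le_left) (h4.trans hU4.symm)
  set P₁ := W₁ ⊓ Ep m with hP1def
  set Q₁ := W₁ ⊓ Em' m with hQ1def
  set P₂ := W₂ ⊓ Ep m with hP2def
  set Q₂ := W₂ ⊓ Em' m with hQ2def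
  have hW1s : W₁ = P₁ ⊔ Q₁ := decomp hW1K
  have hW2s : W₂ = P₂ ⊔ Q₂ := decomp hW2K
  -- dimensions of the eigenlines
  have hd1 := Submodule.finrank_sup_add_finrank_inf_eq P₁ Q₁
  rw [inf_eigen_bot W₁ W₁, ← hW1s, hW1d] at hd1
  simp only [finrank_bot] at hd1
  have hd2 := Submodule.finrank_sup_add_finrank_inf_eq P₂ Q₂
  rw [inf_eigen_bot W₂ W₂, ← hW2s, hW2d] at hd2
  simp only [finrank_bot] at hd2
  have hpos1p := finrank_pos_of_ne_bot hW1p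
  have hpos1m := finrank_pos_of_ne_bot hW1m
  have hpos2p := finrank_pos_of_ne_bot hW2p
  have hpos2m := finrank_pos_of_ne_bot hW2m
  have hfP1 : Module.finrank ℝ P₁ = 1 := by omega
  have hfQ1 : Module.finrank ℝ Q₁ = 1 := by omega
  have hfP2 : Module.finrank ℝ P₂ = 1 := by omega
  have hfQ2 : Module.finrank ℝ Q₂ = 1 := by omega
  have hP1A : P₁ ≤ A := inf_le_inf_right _ hle1
  have hP2A : P₂ ≤ A := inf_le_inf_right _ hle2
  have hQ1B : Q₁ ≤ B := inf_le_inf_right _ hle1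
  have hQ2B : Q₂ ≤ B := inf_le_inf_right _ hle2
  by_cases hp : P₁ = P₂
  · by_cases hq : Q₁ = Q₂
    · exact absurd (hW1s.trans (hp ▸ hq ▸ hW2s.symm)) hne
    · -- P's equal, Q's distinct: get a degenerate vector in P₁
      have hBQQ : Q₁ ⊔ Q₂ = B := sup_lines hfQ1 hfQ2 hq hUm hQ1B hQ2B
      obtain ⟨v, hvP, hv0⟩ := Submodule.exists_mem_ne_zero_of_ne_bot hW1p
      have hvW1 : v ∈ W₁ := hvP.1
      have hvEp : v ∈ Ep m := hvP.2
      have hvW2 : v ∈ W₂ := (hp ▸ hvP : v ∈ P₂).1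
      have hvB : ∀ w ∈ B, Bfun m v w = 0 := by
        rw [← hBQQ]
        exact Bzero_sup (fun w hw => hW1iso v hvW1 w hw.1)
          (fun w hw => hW2iso v hvW2 w hw.1)
      have hvA : ∀ w ∈ A, Bfun m v w = 0 := fun w hw => Bzero_Ep hvEp hw.2
      have hvU : ∀ w ∈ U, Bfun m v w = 0 := by
        rw [← hUAB]; exact Bzero_sup hvA hvB
      exact absurd (hUnd v (hle1 hvW1) hvU) hv0
  · by_cases hq : Q₁ = Q₂
    · -- Q's equal, P's distinct: degenerate vector in Q₁
      have hAPP : P₁ ⊔ P₂ = A := sup_lines hfP1 hfP2 hp hUp hP1A hP2A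
      obtain ⟨v, hvQ, hv0⟩ := Submodule.exists_mem_ne_zero_of_ne_bot hW1m
      have hvW1 : v ∈ W₁ := hvQ.1
      have hvEm : v ∈ Em' m := hvQ.2
      have hvW2 : v ∈ W₂ := (hq ▸ hvQ : v ∈ Q₂).1
      have hvA : ∀ w ∈ A, Bfun m v w = 0 := by
        rw [← hAPP]
        exact Bzero_sup (fun w hw => hW1iso v hvW1 w hw.1)
          (fun w hw => hW2iso v hvW2 w hw.1)
      have hvB : ∀ w ∈ B, Bfun m v w = 0 := fun w hw => Bzero_Em hvEm hw.2
      have hvU : ∀ w ∈ U, Bfun m v w = 0 := by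
        rw [← hUAB]; exact Bzero_sup hvA hvB
      exact absurd (hUnd v (hle1 hvW1) hvU) hv0
    · -- all lines distinct: U = W₁ ⊔ W₂
      have hAPP : P₁ ⊔ P₂ = A := sup_lines hfP1 hfP2 hp hUp hP1A hP2A
      have hBQQ : Q₁ ⊔ Q₂ = B := sup_lines hfQ1 hfQ2 hq hUm hQ1B hQ2B
      rw [← hUAB, ← hAPP, ← hBQQ, hW1s, hW2s, sup_sup_sup_comm]

end Stmt9Aux

/-- two distinct para-complex null-lines W₁ ≠ W₂ lie in a common
nondegenerate para-complex plane U iff W₁ + W₂ is a nondegenerate para-complex plane,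
and in that case U = W₁ + W₂ (so U is unique). -/
theorem stmt_9 (n : ℕ) (hn : 1 ≤ n)
    (W₁ W₂ : Submodule ℝ ((Fin (n+2) → ℝ) × Module.Dual ℝ (Fin (n+2) → ℝ)))
    (h1 : IsPCNullLine (n+2) W₁) (h2 : IsPCNullLine (n+2) W₂) (hne : W₁ ≠ W₂) :
    ((∃ U, IsNondegPlane (n+2) U ∧ W₁ ≤ U ∧ W₂ ≤ U) ↔ IsNondegPlane (n+2) (W₁ ⊔ W₂)) ∧
    (∀ U, IsNondegPlane (n+2) U → W₁ ≤ U → W₂ ≤ U → U = W₁ ⊔ W₂) := by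
  constructor
  · constructor
    · rintro ⟨U, hU, l1, l2⟩
      exact (Stmt9Aux.key hU h1 h2 hne l1 l2) ▸ hU
    · intro h
      exact ⟨W₁ ⊔ W₂, h, le_sup_left, le_sup_right⟩
  · intro U hU l1 l2
    exact Stmt9Aux.key hU h1 h2 hne l1 l2
end

section
/- Let n ≥ 1 and let indices a, b, c range over {1, …, n+1} and i, j, k over {1, …, n}. Let Γᶜ_{ab} be real numbers with Γᶜ_{ab} = Γᶜ_{ba}, let p₁, …, pₙ ∈ ℝ, and define f_{ij}(Γ, p) := −Γ^{n+1}_{ij} + Σ_k p_k Γᵏ_{ij} − p_j Γ^{n+1}_{n+1,i} − p_i Γ^{n+1}_{n+1,j} + Σ_k p_i p_k Γᵏ_{n+1,j} + Σ_k p_j p_k Γᵏ_{n+1,i} − p_i p_j Γ^{n+1}_{n+1,n+1} + Σ_k p_i p_j p_k Γᵏ_{n+1,n+1}. Then: (i) f_{ij}(Γ, p) = f_{ji}(Γ, p) for all i, j; (ii) for any Υ₁, …, Υ_{n+1} ∈ ℝ, setting Γ̂ᶜ_{ab} := Γᶜ_{ab} + δᶜ_a Υ_b + δᶜ_b Υ_a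 (projective change of connection), one has f_{ij}(Γ̂, p) = f_{ij}(Γ, p) for all i, j and all p ∈ ℝⁿ. -/
open Finset in
/-- The defining functions f_{ij}(Γ, p) of the Lagrangian contact structure induced by a
projective structure with Christoffel symbols `Γ c a b` (= Γᶜ_{ab}).  Indices `a, b, c`
range over `Fin (n+1)` (representing 1,…,n+1, with `Fin.last n` playing the role of n+1)
and `i, j, k` over `Fin n` (embedded via `Fin.castSucc`). -/
def fdef (n : ℕ) (Γ : Fin (n+1) → Fin (n+1) → Fin (n+1) → ℝ) (p : Fin n → ℝ)
    (i j : Fin n) : ℝ :=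
  -Γ (Fin.last n) i.castSucc j.castSucc
    + (∑ k : Fin n, p k * Γ k.castSucc i.castSucc j.castSucc)
    - p j * Γ (Fin.last n) (Fin.last n) i.castSucc
    - p i * Γ (Fin.last n) (Fin.last n) j.castSucc
    + (∑ k : Fin n, p i * p k * Γ k.castSucc (Fin.last n) j.castSucc)
    + (∑ k : Fin n, p j * p k * Γ k.castSucc (Fin.last n) i.castSucc)
    - p i * p j * Γ (Fin.last n) (Fin.last n) (Fin.last n)
    + (∑ k : Fin n, p i * p j * p k * Γ k.castSucc (Fin.last n) (Fin.last n))

/-- (i) f_{ij} is symmetric in i, j; (ii) f_{ij} is invariant under the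
projective change Γ̂ᶜ_{ab} = Γᶜ_{ab} + δᶜ_a Υ_b + δᶜ_b Υ_a. -/
theorem stmt_11 (n : ℕ) (hn : 1 ≤ n)
    (Γ : Fin (n+1) → Fin (n+1) → Fin (n+1) → ℝ)
    (hsym : ∀ c a b, Γ c a b = Γ c b a) :
    (∀ (p : Fin n → ℝ) (i j : Fin n), fdef n Γ p i j = fdef n Γ p j i) ∧
    (∀ (Υ : Fin (n+1) → ℝ) (p : Fin n → ℝ) (i j : Fin n),
      fdef n (fun c a b => Γ c a b + (if c = a then Υ b else 0) + (if c = b then Υ a else 0))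
          p i j
        = fdef n Γ p i j) := by
  constructor
  · intro p i j
    simp only [fdef]
    rw [hsym (Fin.last n) i.castSucc j.castSucc]
    conv_lhs => rw [show (∑ k : Fin n, p k * Γ k.castSucc i.castSucc j.castSucc)
      = ∑ k : Fin n, p k * Γ k.castSucc j.castSucc i.castSucc from
      Finset.sum_congr rfl fun k _ => by rw [hsym]]
    simp only [mul_comm (p j) (p i)]
    ring
  · intro Υ p i j
    simp only [fdef, Fin.castSucc_inj, (Fin.castSucc_lt_last _).ne,
      (Fin.castSucc_lt_last _).ne', if_false, if_true, mul_add, mul_ite, mul_zero,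
      Finset.sum_add_distrib, Finset.sum_ite_eq', Finset.mem_univ, if_pos, add_zero]
    ring
end

section
/- Let n ≥ 1 and let indices a, b, c range over {1, …, n+1} and i, j, k over {1, …, n}. For real numbers Γᶜ_{ab}, define f_{ij}(Γ, p) := −Γ^{n+1}_{ij} + Σ_k p_k Γᵏ_{ij} − p_j Γ^{n+1}_{n+1,i} − p_i Γ^{n+1}_{n+1,j} + Σ_k p_i p_k Γᵏ_{n+1,j} + Σ_k p_j p_k Γᵏ_{n+1,i} − p_i p_j Γ^{n+1}_{n+1,n+1} + Σ_k p_i p_j p_k Γᵏ_{n+1,n+1}. Suppose Γ and Γ' both satisfy the symmetry Γᶜ_{ab} = Γᶜ_{ba} and the trace condition Σ_a Γᵃ_{ac} = 0 for every c. If f_{ij}(Γ, p) = f_{ij}(Γ', p) for all i, j ∈ {1,…,n} and all p ∈ ℝⁿ, then Γᶜ_{ab} = Γ'ᶜ_{ab} for all a, b, c. (The symbols of a special representative connection are uniquely determined by the defining functions of the induced Lagrangian contact structure.) -/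
open Finset in
lemma fdef_single (n : ℕ) (Γ : Fin (n+1) → Fin (n+1) → Fin (n+1) → ℝ) (t : ℝ) (m i j : Fin n) :
    fdef n Γ (fun k => if k = m then t else 0) i j =
      -Γ (Fin.last n) i.castSucc j.castSucc
      + t * Γ m.castSucc i.castSucc j.castSucc
      - (if j = m then t else 0) * Γ (Fin.last n) (Fin.last n) i.castSucc
      - (if i = m then t else 0) * Γ (Fin.last n) (Fin.last n) j.castSucc
      + (if i = m then t else 0) * (t * Γ m.castSucc (Fin.last n) j.castSucc)
      + (if j = m then t else 0) * (t * Γ m.castSucc (Fin.last n) i.castSucc)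
      - (if i = m then t else 0) * (if j = m then t else 0) * Γ (Fin.last n) (Fin.last n) (Fin.last n)
      + (if i = m then t else 0) * (if j = m then t else 0) * (t * Γ m.castSucc (Fin.last n) (Fin.last n)) := by
  have hsum : ∀ X : Fin n → ℝ, ∑ k, (if k = m then t else 0) * X k = t * X m := by
    intro X
    simp [ite_mul]
  unfold fdef
  simp only [mul_assoc, ← Finset.mul_sum, hsum]

/-- two symmetric, trace-free ("special") Christoffel symbols inducing the
same defining functions f_{ij} (for all p) must coincide. -/
theorem stmt_12 (n : ℕ) (hn : 1 ≤ n)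
    (Γ Γ' : Fin (n+1) → Fin (n+1) → Fin (n+1) → ℝ)
    (hsym : ∀ c a b, Γ c a b = Γ c b a)
    (hsym' : ∀ c a b, Γ' c a b = Γ' c b a)
    (htr : ∀ c, ∑ a : Fin (n+1), Γ a a c = 0)
    (htr' : ∀ c, ∑ a : Fin (n+1), Γ' a a c = 0)
    (hf : ∀ (p : Fin n → ℝ) (i j : Fin n), fdef n Γ p i j = fdef n Γ' p i j) :
    Γ = Γ' := by
  set L := Fin.last n with hL
  -- degree-0: Γ^{L}_{ij} components
  have hE0 : ∀ i j : Fin n, Γ L i.castSucc j.castSucc = Γ' L i.castSucc j.castSucc := by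
    intro i j
    have h := hf (fun _ => 0) i j
    simp [fdef] at h
    linarith
  -- m ≠ i, m ≠ j : Γ^m_{ij}
  have hB : ∀ i j m : Fin n, m ≠ i → m ≠ j → Γ m.castSucc i.castSucc j.castSucc = Γ' m.castSucc i.castSucc j.castSucc := by
    intro i j m hmi hmj
    have h1 := hf (fun k => if k = m then (1:ℝ) else 0) i j
    rw [fdef_single, fdef_single] at h1
    rw [if_neg (Ne.symm hmj), if_neg (Ne.symm hmi)] at h1
    have hE := hE0 i j
    rw [← hL] at h1
    linarith
  -- m = i ≠ j
  have hC : ∀ i j : Fin n, i ≠ j →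
      Γ i.castSucc i.castSucc j.castSucc - Γ L L j.castSucc
        = Γ' i.castSucc i.castSucc j.castSucc - Γ' L L j.castSucc ∧
      Γ i.castSucc L j.castSucc = Γ' i.castSucc L j.castSucc := by
    intro i j hij
    have h1 := hf (fun k => if k = i then (1:ℝ) else 0) i j
    have h2 := hf (fun k => if k = i then (2:ℝ) else 0) i j
    rw [fdef_single, fdef_single] at h1 h2
    rw [if_pos rfl, if_neg (Ne.symm hij)] at h1 h2
    have hE := hE0 i j
    rw [← hL] at h1 h2
    constructor <;> linarith
  -- m = i = j
  have hD : ∀ i : Fin n,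
      (Γ i.castSucc i.castSucc i.castSucc - 2 * Γ L L i.castSucc
        = Γ' i.castSucc i.castSucc i.castSucc - 2 * Γ' L L i.castSucc) ∧
      (2 * Γ i.castSucc L i.castSucc - Γ L L L
        = 2 * Γ' i.castSucc L i.castSucc - Γ' L L L) ∧
      Γ i.castSucc L L = Γ' i.castSucc L L := by
    intro i
    have h1 := hf (fun k => if k = i then (1:ℝ) else 0) i i
    have h2 := hf (fun k => if k = i then (2:ℝ) else 0) i i
    have h3 := hf (fun k => if k = i then (3:ℝ) else 0) i i
    rw [fdef_single, fdef_single] at h1 h2 h3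
    rw [if_pos rfl] at h1 h2 h3
    have hE := hE0 i i
    rw [← hL] at h1 h2 h3
    refine ⟨by linarith, by linarith, by linarith⟩
  -- trace at lower index: Γ^L_{L j}
  have hA : ∀ j : Fin n, Γ L L j.castSucc = Γ' L L j.castSucc := by
    intro j
    have t1 := htr j.castSucc
    have t2 := htr' j.castSucc
    rw [Fin.sum_univ_castSucc] at t1 t2
    set x := Γ L L j.castSucc - Γ' L L j.castSucc with hx
    have key : ∀ k : Fin n,
        Γ k.castSucc k.castSucc j.castSucc - Γ' k.castSucc k.castSucc j.castSucc
          = x + (if k = j then x else 0) := by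
      intro k
      by_cases hkj : k = j
      · subst hkj
        have := (hD k).1
        rw [if_pos rfl]
        linarith
      · have := (hC k j hkj).1
        simp only [if_neg hkj]
        linarith
    have hsub : ∑ k : Fin n, (Γ k.castSucc k.castSucc j.castSucc - Γ' k.castSucc k.castSucc j.castSucc)
        = (n : ℝ) * x + x := by
      rw [Finset.sum_congr rfl (fun k _ => key k)]
      rw [Finset.sum_add_distrib, Finset.sum_const, Finset.sum_ite_eq' Finset.univ j (fun _ => x)]
      simp [nsmul_eq_mul]
    rw [Finset.sum_sub_distrib] at hsub
    have hxz : ((n : ℝ) + 2) * x = 0 := by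
      have : x = Γ L L j.castSucc - Γ' L L j.castSucc := hx
      nlinarith [t1, t2, hsub]
    have hpos : ((n : ℝ) + 2) ≠ 0 := by positivity
    have := mul_eq_zero.mp hxz
    rcases this with h | h
    · exact absurd h hpos
    · linarith [hx ▸ h]
  -- trace at L : Γ^L_{LL}
  have hCL : Γ L L L = Γ' L L L := by
    have t1 := htr L
    have t2 := htr' L
    rw [Fin.sum_univ_castSucc] at t1 t2
    set y := Γ L L L - Γ' L L L with hy
    have key : ∀ k : Fin n,
        Γ k.castSucc k.castSucc L - Γ' k.castSucc k.castSucc L = y / 2 := by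
      intro k
      have h1 := (hD k).2.1
      have h2 := hsym k.castSucc k.castSucc L
      have h3 := hsym' k.castSucc k.castSucc L
      rw [h2, h3]
      linarith
    have hsub : ∑ k : Fin n, (Γ k.castSucc k.castSucc L - Γ' k.castSucc k.castSucc L)
        = (n : ℝ) * (y / 2) := by
      rw [Finset.sum_congr rfl (fun k _ => key k), Finset.sum_const]
      simp [nsmul_eq_mul]
    rw [Finset.sum_sub_distrib] at hsub
    have hyz : ((n : ℝ) / 2 + 1) * y = 0 := by nlinarith [t1, t2, hsub]
    have hpos : ((n : ℝ) / 2 + 1) ≠ 0 := by positivity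
    rcases mul_eq_zero.mp hyz with h | h
    · exact absurd h hpos
    · linarith
  -- diagonal B: Γ^i_{L i}
  have hBd : ∀ i : Fin n, Γ i.castSucc L i.castSucc = Γ' i.castSucc L i.castSucc := by
    intro i
    have := (hD i).2.1
    linarith [hCL]
  -- all Γ^m_{L j}
  have hBall : ∀ m j : Fin n, Γ m.castSucc L j.castSucc = Γ' m.castSucc L j.castSucc := by
    intro m j
    by_cases hmj : m = j
    · subst hmj; exact hBd m
    · exact (hC m j hmj).2
  -- all Γ^m_{ij}
  have hMall : ∀ m i j : Fin n, Γ m.castSucc i.castSucc j.castSucc = Γ' m.castSucc i.castSucc j.castSucc := by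
    intro m i j
    by_cases hmi : m = i
    · subst hmi
      by_cases hmj : m = j
      · subst hmj
        have := (hD m).1
        linarith [hA m]
      · have := (hC m j hmj).1
        linarith [hA j]
    · by_cases hmj : m = j
      · subst hmj
        rw [hsym, hsym']
        have := (hC m i hmi).1
        linarith [hA i]
      · exact hB i j m hmi hmj
  funext c a b
  induction c using Fin.lastCases with
  | last =>
    induction a using Fin.lastCases with
    | last =>
      induction b using Fin.lastCases with
      | last => exact hCL
      | cast j => exact hA j
    | cast i =>
      induction b using Fin.lastCases with
      | last => rw [hsym, hsym']; exact hA i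
      | cast j => exact hE0 i j
  | cast m =>
    induction a using Fin.lastCases with
    | last =>
      induction b using Fin.lastCases with
      | last => exact (hD m).2.2
      | cast j => exact hBall m j
    | cast i =>
      induction b using Fin.lastCases with
      | last => rw [hsym, hsym']; exact hBall m i
      | cast j => exact hMall m i j
end

section
/- Let n ≥ 1 and let Γᶜ_{ab} : ℝ^{n+1} → ℝ (indices a, b, c ∈ {1,…,n+1}) be smooth functions symmetric in a, b. On ℝ^{n+1} × ℝ^{n+1} with coordinates (x¹,…,x^{n+1}, y₁,…,y_{n+1}) define the Patterson–Walker metric g, the field of symmetric bilinear forms g = Σ_a dxᵃ ⊙ dy_a − Σ_{a,b,c} y_c Γᶜ_{ab}(x) dxᵃ ⊙ dxᵇ. On ℝⁿ × ℝ × ℝⁿ × ℝ with coordinates (x¹,…,xⁿ, u, p₁,…,pₙ, s) define g̃ = Σ_{b,c} (Γ^{n+1}_{bc}(x,u) − Σ_k p_k Γᵏ_{bc}(x,u)) dxᵇ ⊙ dxᶜ + Σ_i dxⁱ ⊙ dp_i + 2 (du − Σ_i p_i dxⁱ) ⊙ ds, where x^{n+1} := u and b, c run over {1,…,n+1}. Let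 Ω := {(x, y) : y_{n+1} < 0} and Φ : Ω → ℝⁿ × ℝ × ℝⁿ × ℝ be the smooth map Φ(x, y) := (x¹,…,xⁿ, x^{n+1}, −y₁/y_{n+1}, …, −yₙ/y_{n+1}, −½ log(−y_{n+1})). Then the pullback of g̃ by Φ equals −y_{n+1}⁻¹ · g on Ω; that is, for every (x,y) ∈ Ω and all ξ, ζ ∈ ℝ^{2n+2}, g̃_{Φ(x,y)}(DΦ_{(x,y)}ξ, DΦ_{(x,y)}ζ) = −y_{n+1}⁻¹ · g_{(x,y)}(ξ, ζ). In particular the two metrics are conformally related via this coordinate transformation. -/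
/-- The Patterson–Walker metric g = Σ_a dxᵃ ⊙ dy_a − Σ_{a,b,c} y_c Γᶜ_{ab}(x) dxᵃ ⊙ dxᵇ
on ℝ^{n+1} × ℝ^{n+1}, as a field of symmetric bilinear forms (here α ⊙ β =
½(α⊗β + β⊗α)); `q` is the base point and `ξ`, `ζ` are tangent vectors. -/
noncomputable def gPW (n : ℕ)
    (Γ : Fin (n+1) → Fin (n+1) → Fin (n+1) → (Fin (n+1) → ℝ) → ℝ)
    (q ξ ζ : (Fin (n+1) → ℝ) × (Fin (n+1) → ℝ)) : ℝ :=
  (∑ a : Fin (n+1), (1/2) * (ξ.1 a * ζ.2 a + ζ.1 a * ξ.2 a))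
    - ∑ a : Fin (n+1), ∑ b : Fin (n+1), ∑ c : Fin (n+1),
        q.2 c * Γ c a b q.1 * ((1/2) * (ξ.1 a * ζ.1 b + ζ.1 a * ξ.1 b))

/-- The Fefferman metric
g̃ = Σ_{b,c} (Γ^{n+1}_{bc} − Σ_k p_k Γᵏ_{bc}) dxᵇ ⊙ dxᶜ + Σ_i dxⁱ ⊙ dp_i
      + 2 (du − Σ_i p_i dxⁱ) ⊙ ds
on ℝⁿ × ℝ × ℝⁿ × ℝ with coordinates (x, u, p, s), where x^{n+1} := u; `q` is the base
point and `ξ`, `ζ` are tangent vectors (components ξ = (ξx, ξu, ξp, ξs)). -/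
noncomputable def gFeff (n : ℕ)
    (Γ : Fin (n+1) → Fin (n+1) → Fin (n+1) → (Fin (n+1) → ℝ) → ℝ)
    (q ξ ζ : (Fin n → ℝ) × ℝ × (Fin n → ℝ) × ℝ) : ℝ :=
  (∑ b : Fin (n+1), ∑ c : Fin (n+1),
      (Γ (Fin.last n) b c (Fin.snoc q.1 q.2.1)
          - ∑ k : Fin n, q.2.2.1 k * Γ k.castSucc b c (Fin.snoc q.1 q.2.1))
        * ((1/2) * ((Fin.snoc ξ.1 ξ.2.1 : Fin (n+1) → ℝ) b
              * (Fin.snoc ζ.1 ζ.2.1 : Fin (n+1) → ℝ) c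
            + (Fin.snoc ζ.1 ζ.2.1 : Fin (n+1) → ℝ) b
              * (Fin.snoc ξ.1 ξ.2.1 : Fin (n+1) → ℝ) c)))
    + (∑ i : Fin n, (1/2) * (ξ.1 i * ζ.2.2.1 i + ζ.1 i * ξ.2.2.1 i))
    + 2 * ((1/2) * ((ξ.2.1 - ∑ i : Fin n, q.2.2.1 i * ξ.1 i) * ζ.2.2.2
        + (ζ.2.1 - ∑ i : Fin n, q.2.2.1 i * ζ.1 i) * ξ.2.2.2))

/-- The coordinate transformation Φ(x, y) = (x¹,…,xⁿ, x^{n+1}, −y_i/y_{n+1},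
−½ log(−y_{n+1})), defined on Ω = {y_{n+1} < 0}. -/
noncomputable def PhiMap (n : ℕ) (w : (Fin (n+1) → ℝ) × (Fin (n+1) → ℝ)) :
    (Fin n → ℝ) × ℝ × (Fin n → ℝ) × ℝ :=
  (fun i : Fin n => w.1 i.castSucc, w.1 (Fin.last n),
    fun i : Fin n => -(w.2 i.castSucc) / w.2 (Fin.last n),
    -(1/2) * Real.log (-(w.2 (Fin.last n))))


open ContinuousLinearMap in
lemma phi_fderiv (n : ℕ) (x y : Fin (n+1) → ℝ) (hY : y (Fin.last n) ≠ 0)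
    (ξ : (Fin (n+1) → ℝ) × (Fin (n+1) → ℝ)) :
    fderiv ℝ (PhiMap n) (x, y) ξ =
      (fun i : Fin n => ξ.1 i.castSucc,
       ξ.1 (Fin.last n),
       fun i : Fin n => -(ξ.2 i.castSucc) / y (Fin.last n)
          + y i.castSucc * ξ.2 (Fin.last n) / (y (Fin.last n))^2,
       -(1/2 : ℝ) * (ξ.2 (Fin.last n) / y (Fin.last n))) := by
  classical
  set E := ((Fin (n+1) → ℝ) × (Fin (n+1) → ℝ))
  let Dx : Fin (n+1) → (E →L[ℝ] ℝ) := fun a => (proj a).comp (fst ℝ _ _)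
  let Dn : Fin (n+1) → (E →L[ℝ] ℝ) := fun a => (proj a).comp (snd ℝ _ _)
  have h1 : HasFDerivAt (fun w : E => fun i : Fin n => w.1 i.castSucc)
      (ContinuousLinearMap.pi fun i : Fin n => Dx i.castSucc) (x, y) :=
    hasFDerivAt_pi.2 fun i => (Dx i.castSucc).hasFDerivAt
  have h2 : HasFDerivAt (fun w : E => w.1 (Fin.last n)) (Dx (Fin.last n)) (x, y) :=
    (Dx (Fin.last n)).hasFDerivAt
  have hinv : HasFDerivAt (fun w : E => (w.2 (Fin.last n))⁻¹)
      ((-(y (Fin.last n)^2)⁻¹) • Dn (Fin.last n)) (x, y) :=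
    (hasDerivAt_inv hY).comp_hasFDerivAt (x, y) (Dn (Fin.last n)).hasFDerivAt
  have h3 : ∀ i : Fin n, HasFDerivAt (fun w : E => -(w.2 i.castSucc) / w.2 (Fin.last n))
      (-(y i.castSucc • -(y (Fin.last n) ^ 2)⁻¹ • Dn (Fin.last n)) + -((y (Fin.last n))⁻¹ • Dn i.castSucc)) (x, y) := by
    intro i
    have hnum : HasFDerivAt (fun w : E => -(w.2 i.castSucc)) (-(Dn i.castSucc)) (x, y) :=
      (Dn i.castSucc).hasFDerivAt.neg
    simpa [div_eq_mul_inv, Pi.mul_def] using hnum.mul hinv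
  have hneg : HasFDerivAt (fun w : E => -(w.2 (Fin.last n))) (-(Dn (Fin.last n))) (x, y) :=
    (Dn (Fin.last n)).hasFDerivAt.neg
  have hlog : HasFDerivAt (fun w : E => Real.log (-(w.2 (Fin.last n))))
      ((-(y (Fin.last n)))⁻¹ • (-(Dn (Fin.last n)))) (x, y) :=
    hneg.log (neg_ne_zero.2 hY)
  have h4 : HasFDerivAt (fun w : E => -(1/2 : ℝ) * Real.log (-(w.2 (Fin.last n))))
      ((-(1/2 : ℝ)) • ((-(y (Fin.last n)))⁻¹ • (-(Dn (Fin.last n))))) (x, y) :=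
    hlog.const_mul _
  have hPhi : HasFDerivAt (PhiMap n)
      ((ContinuousLinearMap.pi fun i : Fin n => Dx i.castSucc).prod
        ((Dx (Fin.last n)).prod
          ((ContinuousLinearMap.pi fun i : Fin n =>
              -(y i.castSucc • -(y (Fin.last n) ^ 2)⁻¹ • Dn (Fin.last n)) + -((y (Fin.last n))⁻¹ • Dn i.castSucc)).prod
            ((-(1/2 : ℝ)) • ((-(y (Fin.last n)))⁻¹ • (-(Dn (Fin.last n)))))))) (x, y) :=
    h1.prodMk (h2.prodMk ((hasFDerivAt_pi.2 h3).prodMk h4))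
  rw [hPhi.fderiv]
  refine Prod.ext rfl (Prod.ext rfl (Prod.ext ?_ ?_))
  · funext i
    simp only [ContinuousLinearMap.prod_apply, ContinuousLinearMap.pi_apply,
      ContinuousLinearMap.add_apply, ContinuousLinearMap.smul_apply,
      ContinuousLinearMap.neg_apply, ContinuousLinearMap.coe_comp', Function.comp_apply,
      ContinuousLinearMap.proj_apply, ContinuousLinearMap.coe_fst',
      ContinuousLinearMap.coe_snd', smul_eq_mul, Dn]
    field_simp
    ring
  · simp only [ContinuousLinearMap.prod_apply, ContinuousLinearMap.smul_apply,
      ContinuousLinearMap.neg_apply, ContinuousLinearMap.coe_comp', Function.comp_apply,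
      ContinuousLinearMap.proj_apply, ContinuousLinearMap.coe_snd', smul_eq_mul, Dn]
    field_simp
/-- on Ω = {y_{n+1} < 0}, the pullback of the Fefferman metric g̃ by Φ
equals −y_{n+1}⁻¹ · g, where g is the Patterson–Walker metric of the (smooth, symmetric)
Christoffel symbols Γ; i.e. the two metrics are conformally related via Φ. -/
theorem stmt_13 (n : ℕ) (hn : 1 ≤ n)
    (Γ : Fin (n+1) → Fin (n+1) → Fin (n+1) → (Fin (n+1) → ℝ) → ℝ)
    (hΓsmooth : ∀ c a b, ContDiff ℝ (⊤ : ℕ∞) (Γ c a b))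
    (hΓsym : ∀ c a b z, Γ c a b z = Γ c b a z) :
    ∀ x y : Fin (n+1) → ℝ, y (Fin.last n) < 0 →
      ∀ ξ ζ : (Fin (n+1) → ℝ) × (Fin (n+1) → ℝ),
        gFeff n Γ (PhiMap n (x, y))
            (fderiv ℝ (PhiMap n) (x, y) ξ) (fderiv ℝ (PhiMap n) (x, y) ζ)
          = -(y (Fin.last n))⁻¹ * gPW n Γ (x, y) ξ ζ := by
  intro x y hY0 ξ ζ
  have hY : y (Fin.last n) ≠ 0 := ne_of_lt hY0
  rw [phi_fderiv n x y hY ξ, phi_fderiv n x y hY ζ]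
  simp only [gFeff, gPW, PhiMap]
  rw [show (Fin.snoc (fun i : Fin n => x i.castSucc) (x (Fin.last n)) : Fin (n+1) → ℝ) = x from
    Fin.snoc_init_self x]
  rw [show (Fin.snoc (fun i : Fin n => ξ.1 i.castSucc) (ξ.1 (Fin.last n)) : Fin (n+1) → ℝ) = ξ.1 from
    Fin.snoc_init_self ξ.1]
  rw [show (Fin.snoc (fun i : Fin n => ζ.1 i.castSucc) (ζ.1 (Fin.last n)) : Fin (n+1) → ℝ) = ζ.1 from
    Fin.snoc_init_self ζ.1]
  have hsumk : ∀ a b : Fin (n+1),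
      (∑ k : Fin n, -y k.castSucc / y (Fin.last n) * Γ k.castSucc a b x)
        = -(y (Fin.last n))⁻¹ * ∑ k : Fin n, y k.castSucc * Γ k.castSucc a b x := by
    intro a b
    rw [Finset.mul_sum]
    exact Finset.sum_congr rfl fun k _ => by ring
  have e1 : (∑ a : Fin (n+1), ∑ b : Fin (n+1),
        (Γ (Fin.last n) a b x
            - ∑ k : Fin n, -y k.castSucc / y (Fin.last n) * Γ k.castSucc a b x) *
          (1 / 2 * (ξ.1 a * ζ.1 b + ζ.1 a * ξ.1 b)))
      = (y (Fin.last n))⁻¹ * ∑ a : Fin (n+1), ∑ b : Fin (n+1),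
          (∑ c : Fin (n+1), y c * Γ c a b x) * (1 / 2 * (ξ.1 a * ζ.1 b + ζ.1 a * ξ.1 b)) := by
    rw [Finset.mul_sum]
    refine Finset.sum_congr rfl fun a _ => ?_
    rw [Finset.mul_sum]
    refine Finset.sum_congr rfl fun b _ => ?_
    rw [hsumk a b, Fin.sum_univ_castSucc (f := fun c : Fin (n+1) => y c * Γ c a b x)]
    linear_combination (-(Γ (Fin.last n) a b x * (1 / 2 * (ξ.1 a * ζ.1 b + ζ.1 a * ξ.1 b)))) *
      mul_inv_cancel₀ hY
  have e2 : (∑ a : Fin (n+1), ∑ b : Fin (n+1), ∑ c : Fin (n+1),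
        y c * Γ c a b x * (1 / 2 * (ξ.1 a * ζ.1 b + ζ.1 a * ξ.1 b)))
      = ∑ a : Fin (n+1), ∑ b : Fin (n+1),
          (∑ c : Fin (n+1), y c * Γ c a b x) * (1 / 2 * (ξ.1 a * ζ.1 b + ζ.1 a * ξ.1 b)) := by
    refine Finset.sum_congr rfl fun a _ => Finset.sum_congr rfl fun b _ => ?_
    rw [Finset.sum_mul]
  have e3 : (∑ i : Fin n, 1 / 2 *
        (ξ.1 i.castSucc * (-ζ.2 i.castSucc / y (Fin.last n)
            + y i.castSucc * ζ.2 (Fin.last n) / y (Fin.last n) ^ 2) +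
          ζ.1 i.castSucc * (-ξ.2 i.castSucc / y (Fin.last n)
            + y i.castSucc * ξ.2 (Fin.last n) / y (Fin.last n) ^ 2)))
      = -(y (Fin.last n))⁻¹ * (∑ i : Fin n, 1 / 2 *
            (ξ.1 i.castSucc * ζ.2 i.castSucc + ζ.1 i.castSucc * ξ.2 i.castSucc))
        + ζ.2 (Fin.last n) / (2 * y (Fin.last n) ^ 2) *
            (∑ i : Fin n, y i.castSucc * ξ.1 i.castSucc)
        + ξ.2 (Fin.last n) / (2 * y (Fin.last n) ^ 2) *
            (∑ i : Fin n, y i.castSucc * ζ.1 i.castSucc) := by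
    rw [Finset.mul_sum, Finset.mul_sum, Finset.mul_sum, ← Finset.sum_add_distrib,
      ← Finset.sum_add_distrib]
    exact Finset.sum_congr rfl fun i _ => by ring
  have e4 : ∀ v : Fin (n+1) → ℝ,
      (∑ i : Fin n, -y i.castSucc / y (Fin.last n) * v i.castSucc)
        = -(y (Fin.last n))⁻¹ * ∑ i : Fin n, y i.castSucc * v i.castSucc := by
    intro v
    rw [Finset.mul_sum]
    exact Finset.sum_congr rfl fun i _ => by ring
  rw [e1, e2, e3, e4 ξ.1, e4 ζ.1,
    Fin.sum_univ_castSucc (f := fun a : Fin (n+1) => 1 / 2 * (ξ.1 a * ζ.2 a + ζ.1 a * ξ.2 a))]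
  field_simp
  ring
end

section
/- Consider the ordinary differential equation y''(x) = ½ ( y'(x) + e^{−2x} y'(x)³ ). Then: (i) for every C₁ ∈ ℝ ∖ {0}, C₂ ∈ ℝ and ε ∈ {1, −1}, the function y(x) := 2 ε C₁⁻¹ √(C₁ eˣ + 1) + C₂ satisfies the equation at every x with C₁ eˣ + 1 > 0; (ii) for every C₂ ∈ ℝ and ε ∈ {1, −1}, the function y(x) := ε eˣ + C₂ satisfies the equation for all x ∈ ℝ; (iii) every constant function y(x) := C₂ satisfies the equation for all x ∈ ℝ. -/
/-!
Away from `C₁ eˣ + 1 = 0` the general solution has first derivative `y' = ε eˣ / s` with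
`s = √(C₁ eˣ + 1)`, and since `ε³ = ε` the cubic term is `e^{-2x} y'³ = ε eˣ / s³`. Both sides of
the equation then equal `ε eˣ (C₁ eˣ + 2) / (2 s³)`. The singular solutions are the case `s = 1`.
-/

open Real Filter Topology

lemma exp_neg_two_mul_mul_div_cube {ε : ℝ} (hε : ε = 1 ∨ ε = -1) (x s : ℝ) :
    exp (-2 * x) * (ε * exp x / s) ^ 3 = ε * exp x / s ^ 3 := by
  have hε3 : ε ^ 3 = ε := by rcases hε with rfl | rfl <;> norm_num
  have hexp : exp (-2 * x) * exp x ^ 3 = exp x := by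
    rw [← exp_nat_mul, ← exp_add]
    ring_nf
  rw [div_pow, mul_pow, hε3, ← mul_div_assoc, mul_left_comm, hexp]

section GeneralSolution

variable {C₁ x : ℝ}

lemma hasDerivAt_sqrt_mul_exp_add_one (hx : 0 < C₁ * exp x + 1) :
    HasDerivAt (fun t => √(C₁ * exp t + 1)) (C₁ * exp x / (2 * √(C₁ * exp x + 1))) x :=
  (((hasDerivAt_exp x).const_mul C₁).add_const 1).sqrt hx.ne'

lemma hasDerivAt_generalSolution (C₂ ε : ℝ) (hC : C₁ ≠ 0) (hx : 0 < C₁ * exp x + 1) :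
    HasDerivAt (fun t => 2 * ε * C₁⁻¹ * √(C₁ * exp t + 1) + C₂)
      (ε * exp x / √(C₁ * exp x + 1)) x := by
  refine (((hasDerivAt_sqrt_mul_exp_add_one hx).const_mul _).add_const C₂).congr_deriv ?_
  have hs : √(C₁ * exp x + 1) ≠ 0 := (sqrt_pos.mpr hx).ne'
  field_simp

lemma deriv_generalSolution_eventuallyEq (C₂ ε : ℝ) (hC : C₁ ≠ 0) (hx : 0 < C₁ * exp x + 1) :
    deriv (fun t => 2 * ε * C₁⁻¹ * √(C₁ * exp t + 1) + C₂)
      =ᶠ[𝓝 x] fun t => ε * exp t / √(C₁ * exp t + 1) := by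
  have hopen : IsOpen {t : ℝ | 0 < C₁ * exp t + 1} :=
    isOpen_lt continuous_const (by fun_prop)
  filter_upwards [hopen.mem_nhds hx] with t ht
  exact (hasDerivAt_generalSolution C₂ ε hC ht).deriv

lemma hasDerivAt_exp_div_sqrt (ε : ℝ) (hx : 0 < C₁ * exp x + 1) :
    HasDerivAt (fun t => ε * exp t / √(C₁ * exp t + 1))
      (ε * exp x * (C₁ * exp x + 2) / (2 * √(C₁ * exp x + 1) ^ 3)) x := by
  have hs : √(C₁ * exp x + 1) ≠ 0 := (sqrt_pos.mpr hx).ne'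
  have hsq : √(C₁ * exp x + 1) ^ 2 = C₁ * exp x + 1 := sq_sqrt hx.le
  refine (((hasDerivAt_exp x).const_mul ε).div
    (hasDerivAt_sqrt_mul_exp_add_one hx) hs).congr_deriv ?_
  generalize √(C₁ * exp x + 1) = S at hs hsq ⊢
  field_simp
  linear_combination 2 * ε * hsq

end GeneralSolution

/-- solutions of the ODE y'' = ½ (y' + e^{-2x} y'³).
(i) the general solutions y(x) = 2 ε C₁⁻¹ √(C₁ eˣ + 1) + C₂ (where C₁ eˣ + 1 > 0);
(ii) the singular solutions y(x) = ε eˣ + C₂;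
(iii) the constant solutions y(x) = C₂. -/
theorem stmt_16 :
    (∀ C₁ C₂ ε : ℝ, C₁ ≠ 0 → (ε = 1 ∨ ε = -1) →
      ∀ x : ℝ, 0 < C₁ * Real.exp x + 1 →
        deriv (deriv (fun t : ℝ => 2 * ε * C₁⁻¹ * Real.sqrt (C₁ * Real.exp t + 1) + C₂)) x =
          (1/2) * (deriv (fun t : ℝ => 2 * ε * C₁⁻¹ * Real.sqrt (C₁ * Real.exp t + 1) + C₂) x
            + Real.exp (-2 * x) *
              (deriv (fun t : ℝ => 2 * ε * C₁⁻¹ * Real.sqrt (C₁ * Real.exp t + 1) + C₂) x)^3)) ∧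
    (∀ C₂ ε : ℝ, (ε = 1 ∨ ε = -1) →
      ∀ x : ℝ,
        deriv (deriv (fun t : ℝ => ε * Real.exp t + C₂)) x =
          (1/2) * (deriv (fun t : ℝ => ε * Real.exp t + C₂) x
            + Real.exp (-2 * x) * (deriv (fun t : ℝ => ε * Real.exp t + C₂) x)^3)) ∧
    (∀ C₂ : ℝ, ∀ x : ℝ,
        deriv (deriv (fun _ : ℝ => C₂)) x =
          (1/2) * (deriv (fun _ : ℝ => C₂) x
            + Real.exp (-2 * x) * (deriv (fun _ : ℝ => C₂) x)^3)) := by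
  refine ⟨fun C₁ C₂ ε hC hε x hx => ?_, fun C₂ ε hε x => ?_, fun C₂ x => by simp⟩
  · have hs : √(C₁ * exp x + 1) ≠ 0 := (sqrt_pos.mpr hx).ne'
    rw [(deriv_generalSolution_eventuallyEq C₂ ε hC hx).deriv_eq,
      (hasDerivAt_exp_div_sqrt ε hx).deriv, (hasDerivAt_generalSolution C₂ ε hC hx).deriv,
      exp_neg_two_mul_mul_div_cube hε]
    have hsq : √(C₁ * exp x + 1) ^ 2 = C₁ * exp x + 1 := sq_sqrt hx.le
    generalize √(C₁ * exp x + 1) = S at hs hsq ⊢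
    field_simp
    linear_combination -ε * hsq
  · have hderiv : deriv (fun t => ε * exp t + C₂) = fun t => ε * exp t :=
      funext fun t => (((hasDerivAt_exp t).const_mul ε).add_const C₂).deriv
    have hcube := exp_neg_two_mul_mul_div_cube hε x 1
    rw [div_one, one_pow, div_one] at hcube
    rw [hderiv, ((hasDerivAt_exp x).const_mul ε).deriv, hcube]
    ring
end
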